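/- An element (γ, s, t) with γ = (γ₁ ≥ γ₂ ≥ 0) ∈ ℝ² and s, t ∈ ℝ, s ≥ 0, t ≥ 0, belongs to T(1,1) if and only if γ₁ − γ₂ ≥ |s − t| and γ₁ + γ₂ ≥ s + t. -/

import Mathlib

/-!
The singular values `σ₁ ≥ σ₂ ≥ 0` of a `2 × 2` matrix `X` are determined by
`σ₁² + σ₂² = ∑ |xᵢⱼ|²` and `σ₁ σ₂ = |det X|`. Writing `a, b, c, d` for the moduli of
`x₁₁, x₁₂, x₂₁, x₂₂`, the determinant satisfies `ad - bc ≤ |det X| ≤ ad + bc`, hence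
`(σ₁ - σ₂)² ≥ (a - d)² + (b - c)²` and `(σ₁ + σ₂)² ≥ (a + d)² + (b - c)²`, which gives the
inequalities. Conversely, the real matrix `[[s, b], [c, t]]` has the required singular values as
soon as `b ± c` are the square roots of `(g₁ ∓ g₂)² - (s ∓ t)²`, which exist exactly under
the inequalities.
-/
open Matrix

/-- Eigenvalues of a (Hermitian) complex matrix, listed in decreasing order. -/
noncomputable def eigVec {k : ℕ} (X : Matrix (Fin k) (Fin k) ℂ) (hX : X.IsHermitian) :
    Fin k → ℝ :=
  fun i => hX.eigenvalues (Tuple.sort hX.eigenvalues i.rev)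

/-- The `i`-th (0-based) singular value of a rectangular complex matrix:
the square root of the `i`-th largest eigenvalue of `Y * Yᴴ` (and `0` for `i ≥ a`). -/
noncomputable def sval {a b : ℕ} (Y : Matrix (Fin a) (Fin b) ℂ) (i : ℕ) : ℝ :=
  if h : i < a then
    Real.sqrt (eigVec (Y * Yᴴ) (Matrix.isHermitian_mul_conjTranspose_self Y) ⟨i, h⟩)
  else 0

/-- The Horn cone `Horn(k)`. -/
def Horn (k : ℕ) : Set ((Fin k → ℝ) × (Fin k → ℝ) × (Fin k → ℝ)) :=
  { v | ∃ (X Y : Matrix (Fin k) (Fin k) ℂ) (hX : X.IsHermitian) (hY : Y.IsHermitian),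
      v.1 = eigVec X hX ∧ v.2.1 = eigVec Y hY ∧ v.2.2 = eigVec (X + Y) (hX.add hY) }

/-- The Littlewood–Richardson cone `LR(m,n)`. -/
def LRcone (m n : ℕ) : Set ((Fin (m + n) → ℝ) × (Fin m → ℝ) × (Fin n → ℝ)) :=
  { v | ∃ (M : Matrix (Fin (m + n)) (Fin (m + n)) ℂ) (hM : M.IsHermitian),
      v.1 = eigVec M hM ∧
      v.2.1 = eigVec (M.submatrix (Fin.castAdd n) (Fin.castAdd n))
        (hM.submatrix (Fin.castAdd n)) ∧
      v.2.2 = eigVec (M.submatrix (Fin.natAdd m) (Fin.natAdd m))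
        (hM.submatrix (Fin.natAdd m)) }

/-- Top-left `p × p` block. -/
def blockTL (p q : ℕ) (X : Matrix (Fin (p + q)) (Fin (p + q)) ℂ) : Matrix (Fin p) (Fin p) ℂ :=
  X.submatrix (Fin.castAdd q) (Fin.castAdd q)

/-- Top-right `p × q` block. -/
def blockTR (p q : ℕ) (X : Matrix (Fin (p + q)) (Fin (p + q)) ℂ) : Matrix (Fin p) (Fin q) ℂ :=
  X.submatrix (Fin.castAdd q) (Fin.natAdd p)

/-- Bottom-left `q × p` block. -/
def blockBL (p q : ℕ) (X : Matrix (Fin (p + q)) (Fin (p + q)) ℂ) : Matrix (Fin q) (Fin p) ℂ :=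
  X.submatrix (Fin.natAdd p) (Fin.castAdd q)

/-- Bottom-right `q × q` block. -/
def blockBR (p q : ℕ) (X : Matrix (Fin (p + q)) (Fin (p + q)) ℂ) : Matrix (Fin q) (Fin q) ℂ :=
  X.submatrix (Fin.natAdd p) (Fin.natAdd p)

/-- `λ* = (−λ_k, …, −λ_1)`. -/
def starVec {k : ℕ} (x : Fin k → ℝ) : Fin k → ℝ := fun i => -x i.rev

/-- `ŝ^{p,q} = (s₁, …, s_q, 0, …, 0, −s_q, …, −s₁) ∈ ℝ^{p+q}` (with `p − q` middle zeros). -/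
noncomputable def hatPQ (p q : ℕ) (s : Fin q → ℝ) : Fin (p + q) → ℝ :=
  fun i =>
    if h : (i : ℕ) < q then s ⟨i, h⟩
    else if h' : (i : ℕ) < p then 0
    else -s ⟨p + q - 1 - i, by have := i.isLt; omega⟩

/-- The cone `A(p,q)`: pairs `(e(X), s(X₁₂))` for `X` Hermitian of size `p+q`. -/
def coneA (p q : ℕ) : Set ((Fin (p + q) → ℝ) × (Fin q → ℝ)) :=
  { v | ∃ (X : Matrix (Fin (p + q)) (Fin (p + q)) ℂ) (hX : X.IsHermitian),
      v.1 = eigVec X hX ∧ ∀ i : Fin q, v.2 i = sval (blockTR p q X) (i : ℕ) }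

/-- The cone `S(p,q)`: triples `(s(X), s(X₁₂), s(X₂₁))`. -/
def coneS (p q : ℕ) : Set ((Fin (p + q) → ℝ) × (Fin q → ℝ) × (Fin q → ℝ)) :=
  { v | ∃ X : Matrix (Fin (p + q)) (Fin (p + q)) ℂ,
      (∀ i : Fin (p + q), v.1 i = sval X (i : ℕ)) ∧
      (∀ i : Fin q, v.2.1 i = sval (blockTR p q X) (i : ℕ)) ∧
      (∀ i : Fin q, v.2.2 i = sval (blockBL p q X) (i : ℕ)) }

/-- The cone `T(p,q)`: triples `(s(X), s(X₁₁), s(X₂₂))`. -/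
def coneT (p q : ℕ) : Set ((Fin (p + q) → ℝ) × (Fin p → ℝ) × (Fin q → ℝ)) :=
  { v | ∃ X : Matrix (Fin (p + q)) (Fin (p + q)) ℂ,
      (∀ i : Fin (p + q), v.1 i = sval X (i : ℕ)) ∧
      (∀ i : Fin p, v.2.1 i = sval (blockTL p q X) (i : ℕ)) ∧
      (∀ i : Fin q, v.2.2 i = sval (blockBR p q X) (i : ℕ)) }

/-- `μ(A) = (a_r − r ≥ … ≥ a₂ − 2 ≥ a₁ − 1)` as a decreasing real vector, for
`A = {a₁ < … < a_r}` a subset of `[n]` (0-based indexing internally). -/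
noncomputable def muVec {n r : ℕ} (A : Finset (Fin n)) (h : A.card = r) : Fin r → ℝ :=
  fun k => (((A.orderIsoOfFin h k.rev : Fin n) : ℕ) : ℝ) - ((k.rev : ℕ) : ℝ)

/-- `A^o = {ℓ + 1 − a : a ∈ A}` inside `[ℓ]`. -/
def opp {n : ℕ} (A : Finset (Fin n)) : Finset (Fin n) := A.image Fin.rev

/-- `|s|_{K ∩ [q]}` where `K ⊆ [n]`, `s ∈ ℝ^q` and `[q]` is viewed inside `[n]`. -/
noncomputable def sumRestr {n q : ℕ} (s : Fin q → ℝ) (K : Finset (Fin n)) : ℝ :=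
  ∑ i ∈ K, (if h : (i : ℕ) < q then s ⟨i, h⟩ else 0)

/-- The augmented matrix `Ŷ^{p,q} = [[0, Y], [Yᴴ, 0]]` of size `p + q`. -/
def hatM (p q : ℕ) (Y : Matrix (Fin p) (Fin q) ℂ) : Matrix (Fin (p + q)) (Fin (p + q)) ℂ :=
  Matrix.reindex finSumFinEquiv finSumFinEquiv (Matrix.fromBlocks 0 Y Yᴴ 0)

section SingularValues

variable {k : ℕ}

lemma eigVec_antitone (X : Matrix (Fin k) (Fin k) ℂ) (hX : X.IsHermitian) :
    Antitone (eigVec X hX) := fun _ _ hij =>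
  Tuple.monotone_sort hX.eigenvalues (Fin.rev_le_rev.mpr hij)

lemma sum_eigVec (X : Matrix (Fin k) (Fin k) ℂ) (hX : X.IsHermitian) :
    ∑ i, eigVec X hX i = ∑ i, hX.eigenvalues i :=
  Equiv.sum_comp (Fin.revPerm.trans (Tuple.sort hX.eigenvalues)) hX.eigenvalues

lemma prod_eigVec (X : Matrix (Fin k) (Fin k) ℂ) (hX : X.IsHermitian) :
    ∏ i, eigVec X hX i = ∏ i, hX.eigenvalues i :=
  Equiv.prod_comp (Fin.revPerm.trans (Tuple.sort hX.eigenvalues)) hX.eigenvalues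

lemma re_trace_mul_conjTranspose_self {m n : Type*} [Fintype m] [Fintype n]
    (A : Matrix m n ℂ) : (A * Aᴴ).trace.re = ∑ i, ∑ j, ‖A i j‖ ^ 2 := by
  simp only [trace, diag, mul_apply, conjTranspose_apply, Complex.re_sum, Complex.star_def,
    Complex.mul_conj, Complex.ofReal_re, Complex.normSq_eq_norm_sq]

variable {a b : ℕ}

lemma sval_nonneg (Y : Matrix (Fin a) (Fin b) ℂ) (i : ℕ) : 0 ≤ sval Y i := by
  unfold sval; split_ifs <;> positivity

lemma sval_antitone (Y : Matrix (Fin a) (Fin b) ℂ) : Antitone (sval Y) := by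
  intro i j hij
  by_cases hj : j < a
  · rw [sval, sval, dif_pos hj, dif_pos (hij.trans_lt hj)]
    exact Real.sqrt_le_sqrt (eigVec_antitone _ _ (Fin.mk_le_mk.mpr hij))
  · rw [sval, dif_neg hj]
    exact sval_nonneg Y i

lemma sval_sq (Y : Matrix (Fin a) (Fin b) ℂ) (i : Fin a) :
    sval Y i ^ 2 = eigVec (Y * Yᴴ) (isHermitian_mul_conjTranspose_self Y) i := by
  rw [sval, dif_pos i.isLt]
  exact Real.sq_sqrt (eigenvalues_self_mul_conjTranspose_nonneg Y _)

lemma sum_sval_sq (Y : Matrix (Fin a) (Fin b) ℂ) :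
    ∑ i : Fin a, sval Y i ^ 2 = ∑ i, ∑ j, ‖Y i j‖ ^ 2 := by
  have hY := isHermitian_mul_conjTranspose_self Y
  simp [sval_sq, sum_eigVec, ← re_trace_mul_conjTranspose_self, hY.trace_eq_sum_eigenvalues]

lemma prod_sval (X : Matrix (Fin k) (Fin k) ℂ) : ∏ i : Fin k, sval X i = ‖X.det‖ := by
  have hX := isHermitian_mul_conjTranspose_self X
  refine (sq_eq_sq₀ (Finset.prod_nonneg fun (i : Fin k) _ => sval_nonneg X i)
    (norm_nonneg X.det)).1 ?_
  have hdet : (X * Xᴴ).det = (‖X.det‖ : ℂ) ^ 2 := by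
    rw [det_mul, det_conjTranspose, Complex.star_def, Complex.mul_conj']
  apply Complex.ofReal_injective
  rw [← Finset.prod_pow, Complex.ofReal_pow, ← hdet, hX.det_eq_prod_eigenvalues]
  simp only [sval_sq, prod_eigVec, Complex.ofReal_prod]
  rfl

lemma sval_fin_one (Y : Matrix (Fin 1) (Fin 1) ℂ) : sval Y 0 = ‖Y 0 0‖ := by
  have h := sum_sval_sq Y
  simp only [Fin.sum_univ_one] at h
  exact (sq_eq_sq₀ (sval_nonneg Y 0) (norm_nonneg _)).1 h

end SingularValues

lemma eq_and_eq_of_sq_add_sq_eq_of_mul_eq {x y u v : ℝ} (hy : 0 ≤ y) (hyx : y ≤ x)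
    (hv : 0 ≤ v) (hvu : v ≤ u) (hsq : x ^ 2 + y ^ 2 = u ^ 2 + v ^ 2) (hmul : x * y = u * v) :
    x = u ∧ y = v := by
  have hadd : x + y = u + v :=
    (sq_eq_sq₀ (by linarith) (by linarith)).1 (by linear_combination hsq + 2 * hmul)
  have hsub : x - y = u - v :=
    (sq_eq_sq₀ (by linarith) (by linarith)).1 (by linear_combination hsq - 2 * hmul)
  constructor <;> linarith

lemma sval_fin_two_eq_iff (X : Matrix (Fin 2) (Fin 2) ℂ) {σ₁ σ₂ : ℝ} (h₂ : 0 ≤ σ₂)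
    (h₂₁ : σ₂ ≤ σ₁) :
    sval X 0 = σ₁ ∧ sval X 1 = σ₂ ↔
      σ₁ ^ 2 + σ₂ ^ 2 = ∑ i, ∑ j, ‖X i j‖ ^ 2 ∧ σ₁ * σ₂ = ‖X.det‖ := by
  have hsq := sum_sval_sq X
  have hprod := prod_sval X
  simp only [Fin.sum_univ_two, Fin.prod_univ_two, Fin.val_zero, Fin.val_one] at hsq hprod
  constructor
  · rintro ⟨rfl, rfl⟩
    exact ⟨by simpa only [Fin.sum_univ_two] using hsq, hprod⟩
  · rintro ⟨hσsq, hσprod⟩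
    refine eq_and_eq_of_sq_add_sq_eq_of_mul_eq (sval_nonneg X 1)
      (sval_antitone X zero_le_one) h₂ h₂₁ ?_ (hprod.trans hσprod.symm)
    simpa only [Fin.sum_univ_two, hσsq] using hsq

lemma norm_det_fin_two_le (X : Matrix (Fin 2) (Fin 2) ℂ) :
    ‖X.det‖ ≤ ‖X 0 0‖ * ‖X 1 1‖ + ‖X 0 1‖ * ‖X 1 0‖ := by
  rw [det_fin_two, ← norm_mul, ← norm_mul]
  exact norm_sub_le _ _

lemma sub_le_norm_det_fin_two (X : Matrix (Fin 2) (Fin 2) ℂ) :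
    ‖X 0 0‖ * ‖X 1 1‖ - ‖X 0 1‖ * ‖X 1 0‖ ≤ ‖X.det‖ := by
  rw [det_fin_two, ← norm_mul, ← norm_mul]
  exact norm_sub_norm_le _ _

lemma abs_sub_le_and_add_le_of_sq_add_sq_eq {σ₁ σ₂ a b c d : ℝ} (hσ : σ₂ ≤ σ₁) (hσ₂ : 0 ≤ σ₂)
    (hsq : σ₁ ^ 2 + σ₂ ^ 2 = a ^ 2 + b ^ 2 + c ^ 2 + d ^ 2)
    (hlow : a * d - b * c ≤ σ₁ * σ₂) (hup : σ₁ * σ₂ ≤ a * d + b * c) :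
    |a - d| ≤ σ₁ - σ₂ ∧ a + d ≤ σ₁ + σ₂ := by
  constructor
  · refine abs_le_of_sq_le_sq ?_ (by linarith)
    nlinarith [sq_nonneg (b - c)]
  · refine (abs_le_of_sq_le_sq ?_ (by linarith)).trans' (le_abs_self _)
    nlinarith [sq_nonneg (b - c)]

lemma exists_sq_add_sq_eq_and_mul_eq {g₁ g₂ s t : ℝ} (hdiff : |s - t| ≤ g₁ - g₂)
    (hsum : |s + t| ≤ g₁ + g₂) :
    ∃ b c : ℝ, b ^ 2 + c ^ 2 = g₁ ^ 2 + g₂ ^ 2 - s ^ 2 - t ^ 2 ∧ b * c = s * t - g₁ * g₂ := by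
  obtain ⟨P, hP⟩ : ∃ P : ℝ, P ^ 2 = (g₁ + g₂) ^ 2 - (s + t) ^ 2 :=
    ⟨_, Real.sq_sqrt (sub_nonneg.2 (sq_le_sq' (abs_le.1 hsum).1 (abs_le.1 hsum).2))⟩
  obtain ⟨Q, hQ⟩ : ∃ Q : ℝ, Q ^ 2 = (g₁ - g₂) ^ 2 - (s - t) ^ 2 :=
    ⟨_, Real.sq_sqrt (sub_nonneg.2 (sq_le_sq' (abs_le.1 hdiff).1 (abs_le.1 hdiff).2))⟩
  exact ⟨(P + Q) / 2, (Q - P) / 2, by linear_combination (hP + hQ) / 2,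
    by linear_combination (hQ - hP) / 4⟩

lemma mem_coneT_one_one_iff (g : Fin (1 + 1) → ℝ) (s t : ℝ) :
    (g, fun _ : Fin 1 => s, fun _ : Fin 1 => t) ∈ coneT 1 1 ↔
      ∃ X : Matrix (Fin 2) (Fin 2) ℂ, (sval X 0 = g 0 ∧ sval X 1 = g 1) ∧
        ‖X 0 0‖ = s ∧ ‖X 1 1‖ = t := by
  simp only [coneT, Set.mem_ofPred_eq, Fin.forall_fin_one, blockTL, blockBR, Fin.val_zero,
    sval_fin_one, submatrix_apply]
  exact exists_congr fun X =>
    and_congr (Fin.forall_fin_two.trans (and_congr eq_comm eq_comm)) (and_congr eq_comm eq_comm)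

theorem stmt_14 (g : Fin (1 + 1) → ℝ) (s t : ℝ)
    (hg : g 0 ≥ g 1) (hg0 : g 1 ≥ 0) (hs : s ≥ 0) (ht : t ≥ 0) :
    (g, fun _ : Fin 1 => s, fun _ : Fin 1 => t) ∈ coneT 1 1 ↔
      (g 0 - g 1 ≥ |s - t| ∧ g 0 + g 1 ≥ s + t) := by
  rw [mem_coneT_one_one_iff]
  constructor
  · rintro ⟨X, hX, rfl, rfl⟩
    obtain ⟨hsq, hdet⟩ := (sval_fin_two_eq_iff X hg0 hg).1 hX
    simp only [Fin.sum_univ_two] at hsq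
    exact abs_sub_le_and_add_le_of_sq_add_sq_eq hg hg0 (by linear_combination hsq)
      (hdet ▸ sub_le_norm_det_fin_two X) (hdet ▸ norm_det_fin_two_le X)
  · rintro ⟨hdiff, hsum⟩
    obtain ⟨b, c, hbc_sq, hbc_mul⟩ :=
      exists_sq_add_sq_eq_and_mul_eq hdiff (by rwa [abs_of_nonneg (add_nonneg hs ht)])
    refine ⟨!![(s : ℂ), b; c, t], (sval_fin_two_eq_iff _ hg0 hg).2 ⟨?_, ?_⟩,
      by simp [hs], by simp [ht]⟩
    · simp only [of_apply, cons_val', cons_val_fin_one, Fin.sum_univ_two,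
        cons_val_zero, cons_val_one, Complex.norm_real, Real.norm_eq_abs, sq_abs]
      linear_combination -hbc_sq
    · have hdet : s * t - b * c = g 0 * g 1 := by linarith
      rw [det_fin_two_of]
      norm_cast
      rw [hdet, Real.norm_of_nonneg (mul_nonneg (hg0.trans hg) hg0)]
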